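/- Let κ > 0, τ > 0 and γ < 0 be real numbers. Then every complex root λ of the quadratic τλ² + (1 − τκ − τγ)λ − γ = 0 has strictly negative real part if and only if τ(κ + γ) < 1. In particular, when κ + γ > 0 this holds exactly for 0 < τ < 1/(κ + γ). -/

import Mathlib

/-!
Vieta: the two complex roots of `a z² + b z + c` (with `a, c > 0`) sum to `-b / a`, so if both
have negative real part then `b > 0`. Conversely, multiplying the equation by `conj z` and taking
real parts gives `re z · (a |z|² + c) = -b |z|²`, so `b > 0` forces `re z < 0`. For the spike
quadratic, `a = τ`, `b = 1 - τ(κ + γ)` and `c = -γ`.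
-/

open Complex

lemma exists_roots_add_eq_of_quadratic {K : Type*} [Field K] [IsAlgClosed K] [NeZero (2 : K)]
    {a : K} (b c : K) (ha : a ≠ 0) :
    ∃ z w : K, a * z ^ 2 + b * z + c = 0 ∧ a * w ^ 2 + b * w + c = 0 ∧ z + w = -b / a := by
  obtain ⟨s, hs⟩ := IsAlgClosed.exists_eq_mul_self (discrim a b c)
  have hroots := quadratic_eq_zero_iff ha hs
  refine ⟨(-b + s) / (2 * a), (-b - s) / (2 * a), ?_, ?_, ?_⟩
  · rw [sq, hroots]; exact Or.inl rfl
  · rw [sq, hroots]; exact Or.inr rfl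
  · field_simp; ring

lemma re_mul_eq_of_quadratic_eq_zero {a b c : ℝ} {z : ℂ}
    (h : (a : ℂ) * z ^ 2 + b * z + c = 0) :
    z.re * (a * normSq z + c) = -b * normSq z := by
  have hre := congrArg re h
  have him := congrArg im h
  simp only [sq, add_re, add_im, mul_re, mul_im, ofReal_re, ofReal_im, zero_re, zero_im]
    at hre him
  rw [normSq_apply]
  linear_combination z.re * hre + z.im * him

lemma re_neg_of_quadratic_eq_zero {a b c : ℝ} {z : ℂ} (ha : 0 < a) (hb : 0 < b) (hc : 0 < c)
    (h : (a : ℂ) * z ^ 2 + b * z + c = 0) : z.re < 0 := by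
  have hz : z ≠ 0 := by
    rintro rfl
    exact hc.ne' (by simpa using h)
  have hn : 0 < normSq z := normSq_pos.mpr hz
  refine neg_of_mul_neg_left ?_ (by positivity : 0 ≤ a * normSq z + c)
  rw [re_mul_eq_of_quadratic_eq_zero h]
  nlinarith

/-- Routh–Hurwitz criterion for real quadratics. -/
theorem forall_re_neg_of_quadratic_iff {a b c : ℝ} (ha : 0 < a) (hc : 0 < c) :
    (∀ z : ℂ, (a : ℂ) * z ^ 2 + b * z + c = 0 → z.re < 0) ↔ 0 < b := by
  refine ⟨fun hall => ?_, fun hb z hz => re_neg_of_quadratic_eq_zero ha hb hc hz⟩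
  obtain ⟨z, w, hz, hw, hsum⟩ :=
    exists_roots_add_eq_of_quadratic (b : ℂ) c (ofReal_ne_zero.mpr ha.ne')
  have hre : (z + w).re = -b / a := by
    rw [hsum, ← ofReal_neg, ← ofReal_div, ofReal_re]
  have hneg : -b / a < 0 := by
    rw [← hre, add_re]
    exact add_neg (hall z hz) (hall w hw)
  linarith [(div_lt_iff₀ ha).mp hneg]

theorem stmt_6 (κ τ γ : ℝ) (hτ : 0 < τ) (hγ : γ < 0) :
    ((∀ lam : ℂ,
        (τ : ℂ) * lam ^ 2 + (1 - (τ : ℂ) * (κ : ℂ) - (τ : ℂ) * (γ : ℂ)) * lam - (γ : ℂ) = 0 →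
        lam.re < 0) ↔ τ * (κ + γ) < 1) ∧
    (0 < κ + γ →
      ((∀ lam : ℂ,
          (τ : ℂ) * lam ^ 2 + (1 - (τ : ℂ) * (κ : ℂ) - (τ : ℂ) * (γ : ℂ)) * lam - (γ : ℂ) = 0 →
          lam.re < 0) ↔ 0 < τ ∧ τ < 1 / (κ + γ))) := by
  have hpoly : ∀ lam : ℂ,
      (τ : ℂ) * lam ^ 2 + (1 - (τ : ℂ) * (κ : ℂ) - (τ : ℂ) * (γ : ℂ)) * lam - (γ : ℂ) =
        (τ : ℂ) * lam ^ 2 + ((1 - τ * (κ + γ) : ℝ) : ℂ) * lam + ((-γ : ℝ) : ℂ) := by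
    intro lam; push_cast; ring
  have key : (∀ lam : ℂ,
      (τ : ℂ) * lam ^ 2 + (1 - (τ : ℂ) * (κ : ℂ) - (τ : ℂ) * (γ : ℂ)) * lam - (γ : ℂ) = 0 →
        lam.re < 0) ↔ τ * (κ + γ) < 1 := by
    simp only [hpoly]
    rw [forall_re_neg_of_quadratic_iff hτ (neg_pos.mpr hγ), sub_pos]
  refine ⟨key, fun hκγ => ?_⟩
  rw [key, lt_div_iff₀ hκγ]
  exact (and_iff_right hτ).symm
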